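/- The derivative of the monodromy of the round cylinder vanishes at λ = 1: with M(λ) = F_λ(1), one has M'(1) = 0, where the derivative is with respect to λ (using a holomorphic branch of λ^{1/2} near 1 with 1^{1/2}=1). -/

import Mathlib

/-!
At `λ = 1` the phase `μ(λ) = (π/2)(λ^{-1/2} + λ^{1/2})` is critical, since the two exponents
`∓1/2` cancel, and `μ(1) = π` is a zero of `sin`. Hence `cos ∘ μ` and every product
`g · (sin ∘ μ)` with `g` differentiable have vanishing derivative at `1`, which covers all four
entries of the monodromy.
-/

open Complex Matrix

lemma hasDerivAt_cpow_const_one (c : ℂ) : HasDerivAt (fun z : ℂ => z ^ c) c 1 := by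
  simpa using (hasDerivAt_id (1 : ℂ)).cpow_const (c := c) (by simp)

lemma hasDerivAt_ccos_comp_of_hasDerivAt_zero {f : ℂ → ℂ} {x : ℂ} (hf : HasDerivAt f 0 x) :
    HasDerivAt (fun z => Complex.cos (f z)) 0 x := by
  simpa using hf.ccos

lemma hasDerivAt_mul_csin_comp_of_hasDerivAt_zero {f g : ℂ → ℂ} {g' x : ℂ}
    (hg : HasDerivAt g g' x) (hf : HasDerivAt f 0 x) (hsin : Complex.sin (f x) = 0) :
    HasDerivAt (fun z => g z * Complex.sin (f z)) 0 x := by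
  simpa [hsin] using hg.fun_mul hf.csin

lemma hasDerivAt_round_cylinder_phase_one :
    HasDerivAt (fun z : ℂ => (Real.pi / 2 : ℂ) * (z ^ (-(1/2) : ℂ) + z ^ ((1/2) : ℂ))) 0 1 := by
  simpa using ((hasDerivAt_cpow_const_one (-(1/2))).add
    (hasDerivAt_cpow_const_one (1/2))).const_mul (Real.pi / 2 : ℂ)

lemma round_cylinder_phase_one :
    (Real.pi / 2 : ℂ) * ((1 : ℂ) ^ (-(1/2) : ℂ) + (1 : ℂ) ^ ((1/2) : ℂ)) = Real.pi := by
  rw [one_cpow, one_cpow]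
  ring

theorem round_cylinder_monodromy_deriv_vanishes
    (μ : ℂ → ℂ) (hμ : ∀ lam : ℂ, μ lam = (Real.pi / 2 : ℂ) * (lam ^ (-(1/2) : ℂ) + lam ^ ((1/2) : ℂ)))
    (M : ℂ → Matrix (Fin 2) (Fin 2) ℂ)
    (hM : ∀ lam : ℂ, M lam =
      !![Complex.cos (μ lam), Complex.I * lam ^ (-(1/2) : ℂ) * Complex.sin (μ lam);
         Complex.I * lam ^ ((1/2) : ℂ) * Complex.sin (μ lam), Complex.cos (μ lam)]) :
    ∀ i j : Fin 2, deriv (fun lam : ℂ => M lam i j) 1 = 0 := by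
  have hμ' : HasDerivAt μ 0 1 := funext hμ ▸ hasDerivAt_round_cylinder_phase_one
  have hsin : Complex.sin (μ 1) = 0 := by
    rw [hμ, round_cylinder_phase_one, ← ofReal_sin, Real.sin_pi, ofReal_zero]
  have hcos := hasDerivAt_ccos_comp_of_hasDerivAt_zero hμ'
  have hoff (c : ℂ) := hasDerivAt_mul_csin_comp_of_hasDerivAt_zero
    ((hasDerivAt_cpow_const_one c).const_mul I) hμ' hsin
  intro i j
  fin_cases i <;> fin_cases j <;> simp only [hM, of_apply, cons_val', cons_val_zero,
    cons_val_one, empty_val', cons_val_fin_one, Fin.zero_eta, Fin.mk_one, Fin.isValue]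
  exacts [hcos.deriv, (hoff _).deriv, (hoff _).deriv, hcos.deriv]
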